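/- Let (E_r, d_r) be a cohomological spectral sequence of modules over a ring R, and L : E_r^{p,q} → E_r^{p,q+2} a morphism of spectral sequences (commuting with all differentials). Suppose there is d ≥ 0 such that for all k ≥ 0 and all p, the map L^k : E_2^{p,d-k} → E_2^{p,d+k} is an isomorphism, and E_2^{p,q} = 0 for q < 0 or q > 2d. If one further assumes the primitive decomposition E_2^{p,q} = ⊕_{j≥0} L^j P^{p,q-2j} with P^{p,q} = ker(L^{d-q+1} : E_2^{p,q} → E_2^{p,2d-q+2}), then d_2 vanishes on E_2 (Deligne's Lefschetz degeneration criterion, first step). -/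

import Mathlib

/-- A first-quadrant cohomological spectral sequence of `ℚ`-vector spaces,
starting at the `E₂`-page.  `E r p q` is the `(p,q)` entry of the `r`-th page,
`d r` is the differential of bidegree `(r, 1-r)`, and `iso` identifies the
next page with the homology (kernel modulo image) of the previous one. -/
structure FQSS where
  E : ℕ → ℤ → ℤ → Type
  [ac : ∀ r p q, AddCommGroup (E r p q)]
  [mo : ∀ r p q, Module ℚ (E r p q)]
  d : ∀ r p q, E r p q →ₗ[ℚ] E r (p + r) (q + 1 - r)
  dd : ∀ r p q, (d r (p + r) (q + 1 - r)).comp (d r p q) = 0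
  fq : ∀ r p q, p < 0 ∨ q < 0 → Subsingleton (E r p q)
  iso : ∀ r p q,
    E (r + 1) (p + r) (q + 1 - r) ≃ₗ[ℚ]
      (↥(LinearMap.ker (d r (p + r) (q + 1 - r))) ⧸
        (Submodule.comap (LinearMap.ker (d r (p + r) (q + 1 - r))).subtype
          (LinearMap.range (d r p q))))

attribute [instance] FQSS.ac FQSS.mo


/-- Transport along an equality of the internal degree. -/
def FQSS.castQ (S : FQSS) (r : ℕ) (p : ℤ) {q q' : ℤ} (h : q = q') :
    S.E r p q →ₗ[ℚ] S.E r p q' := by subst h; exact LinearMap.id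

/-- The `k`-th iterate of a degree-`(0,2)` operator `L` on a page of a spectral
sequence. -/
def FQSS.Lpow (S : FQSS) (L : ∀ r p q, S.E r p q →ₗ[ℚ] S.E r p (q + 2)) (r : ℕ) :
    ∀ (k : ℕ) (p q : ℤ), S.E r p q →ₗ[ℚ] S.E r p (q + 2 * k)
  | 0, p, q => S.castQ r p (by push_cast; ring)
  | (k + 1), p, q =>
      (S.castQ r p (by push_cast; ring)).comp
        ((L r p (q + 2 * k)).comp (FQSS.Lpow S L r k p q))

/-!
If `z ∈ P^{p,q}` with `q ≤ d`, then `d₂ z` lies in row `q - 1 = d - k` for `k = d - q + 1`,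
where `L^k` is injective by hard Lefschetz; since `L^k` commutes with `d₂` and kills `z`,
`d₂ z = 0`. For `q > d` the primitive part `P^{p,q} = ker L⁰` is zero. Hence `d₂` vanishes on
every `L^j P^{p,q-2j}`, and so on all of `E₂` by the primitive decomposition.
-/

namespace FQSS

section Cast

variable (S : FQSS) (r : ℕ) (p : ℤ)

lemma castQ_injective {q q' : ℤ} (h : q = q') : Function.Injective (S.castQ r p h) := by
  subst h; exact Function.injective_id

@[simp]
lemma castQ_castQ {q₁ q₂ q₃ : ℤ} (h : q₁ = q₂) (h' : q₂ = q₃) (x : S.E r p q₁) :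
    S.castQ r p h' (S.castQ r p h x) = S.castQ r p (h.trans h') x := by
  subst h h'; rfl

lemma d_castQ {q q' : ℤ} (h : q = q') (x : S.E r p q) :
    S.d r p q' (S.castQ r p h x) = S.castQ r (p + r) (by rw [h]) (S.d r p q x) := by
  subst h; rfl

lemma apply_castQ (f : ∀ q, S.E r p q →ₗ[ℚ] S.E r p (q + 2)) {q q' : ℤ} (h : q = q')
    (x : S.E r p q) : f q' (S.castQ r p h x) = S.castQ r p (by rw [h]) (f q x) := by
  subst h; rfl

end Cast

section Lefschetz

variable (S : FQSS) (L : ∀ r p q, S.E r p q →ₗ[ℚ] S.E r p (q + 2))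

def CommutesWithD : Prop :=
  ∀ (r : ℕ) (p q : ℤ),
    (S.castQ r (p + r) (show q + 1 - r + 2 = q + 2 + 1 - r by ring)).comp
        ((L r (p + r) (q + 1 - r)).comp (S.d r p q)) =
      (S.d r p (q + 2)).comp (L r p q)

def HardLefschetz (d : ℕ) : Prop :=
  ∀ (k : ℕ) (p : ℤ), Function.Bijective
    ((S.castQ 2 p (show (d : ℤ) - k + 2 * k = d + k by ring)).comp (S.Lpow L 2 k p ((d : ℤ) - k)))

lemma Lpow_succ_apply (r k : ℕ) (p q : ℤ) (x : S.E r p q) :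
    S.Lpow L r (k + 1) p q x =
      S.castQ r p (by push_cast; ring) (L r p (q + 2 * k) (S.Lpow L r k p q x)) := rfl

lemma d_Lpow (hLd : S.CommutesWithD L) (r k : ℕ) (p q : ℤ) (z : S.E r p q) :
    S.d r p (q + 2 * k) (S.Lpow L r k p q z) =
      S.castQ r (p + r) (by ring) (S.Lpow L r k (p + r) (q + 1 - r) (S.d r p q z)) := by
  induction k with
  | zero => exact (S.d_castQ r p _ z).trans (S.castQ_castQ r (p + r) _ _ _).symm
  | succ k ih =>
    have hcomm := LinearMap.congr_fun (hLd r p (q + 2 * k)) (S.Lpow L r k p q z)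
    simp only [LinearMap.comp_apply] at hcomm
    rw [Lpow_succ_apply, d_castQ, ← hcomm, ih, apply_castQ, Lpow_succ_apply]
    simp only [castQ_castQ]

lemma HardLefschetz.Lpow_injective {S : FQSS} {L : ∀ r p q, S.E r p q →ₗ[ℚ] S.E r p (q + 2)}
    {d : ℕ} (hHL : S.HardLefschetz L d) (k : ℕ) (p q : ℤ) (hq : q = d - k) :
    Function.Injective (S.Lpow L 2 k p q) := by
  subst hq
  exact Function.Injective.of_comp (hHL k p).injective

lemma d_eq_zero_of_Lpow_eq_zero {d : ℕ} (hLd : S.CommutesWithD L) (hHL : S.HardLefschetz L d)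
    {p q : ℤ} {z : S.E 2 p q} (hz : S.Lpow L 2 ((d - q + 1 : ℤ).toNat) p q z = 0) :
    S.d 2 p q z = 0 := by
  by_cases hqd : q ≤ d
  · set k := (d - q + 1 : ℤ).toNat
    have hkq : (k : ℤ) = d - q + 1 := Int.toNat_of_nonneg (by omega)
    apply hHL.Lpow_injective k (p + 2) _ (by omega)
    apply S.castQ_injective 2 (p + 2) (show q + 1 - 2 + 2 * (k : ℤ) = q + 2 * k + 1 - 2 by ring)
    have hcomm := S.d_Lpow L hLd 2 k p q z
    rw [hz, map_zero] at hcomm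
    rw [map_zero, map_zero]
    exact hcomm.symm
  · have hk0 : (d - q + 1 : ℤ).toNat = 0 := Int.toNat_of_nonpos (by omega)
    rw [hk0] at hz
    obtain rfl : z = 0 := S.castQ_injective 2 p _ (hz.trans (map_zero _).symm)
    exact map_zero _

end Lefschetz

end FQSS

/-- Deligne's Lefschetz degeneration criterion, first step.  Let
`(E_r, d_r)` be a first-quadrant spectral sequence of `ℚ`-vector spaces with
`E₂^{p,q} = 0` for `q > 2d`, and `L` a morphism of spectral sequences of bidegree
`(0,2)`.  If `L^k : E₂^{p,d-k} → E₂^{p,d+k}` is an isomorphism for all `k ≥ 0`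
and all `p` (hard Lefschetz on `E₂`), and `E₂` admits the primitive
decomposition `E₂^{p,q} = ⊕_{j≥0} L^j P^{p,q-2j}` with
`P^{p,q} = ker (L^{d-q+1} : E₂^{p,q} → E₂^{p,2d-q+2})`, then `d₂ = 0`. -/
theorem stmt_2 (S : FQSS) (d : ℕ)
    -- `L`, a morphism of spectral sequences of bidegree `(0,2)` ...
    (L : ∀ r p q, S.E r p q →ₗ[ℚ] S.E r p (q + 2))
    -- ... commuting with all the differentials
    (hLd : ∀ (r : ℕ) (p q : ℤ),
      (S.castQ r (p + r) (show q + 1 - r + 2 = q + 2 + 1 - r by push_cast; ring)).comp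
          ((L r (p + r) (q + 1 - r)).comp (S.d r p q)) =
        (S.d r p (q + 2)).comp (L r p q))
    -- hard Lefschetz on the `E₂` page: `L^k : E₂^{p,d-k} ≅ E₂^{p,d+k}`
    (hHL : ∀ (k : ℕ) (p : ℤ), Function.Bijective
      ((S.castQ 2 p (show (d : ℤ) - k + 2 * k = d + k by push_cast; ring)).comp
        (S.Lpow L 2 k p ((d : ℤ) - k))))
    -- the primitive decomposition of `E₂`, with
    -- `P^{p,q} = ker (L^{d-q+1} : E₂^{p,q} → E₂^{p,2d-q+2})`
    (hprim : ∀ (p q : ℤ), DirectSum.IsInternal (fun j : ℕ =>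
      Submodule.map
        ((S.castQ 2 p (show q - 2 * j + 2 * (j : ℤ) = q by push_cast; ring)).comp
          (S.Lpow L 2 j p (q - 2 * j)))
        (LinearMap.ker (S.Lpow L 2 (((d : ℤ) - (q - 2 * j) + 1).toNat) p (q - 2 * j))))) :
    ∀ p q, S.d 2 p q = 0 := by
  intro p q
  refine LinearMap.ker_eq_top.mp (top_le_iff.mp ?_)
  rw [← (hprim p q).submodule_iSup_eq_top]
  refine iSup_le fun j => Submodule.map_le_iff_le_comap.mpr fun z hz => ?_
  have hdz : S.d 2 p (q - 2 * j) z = 0 := S.d_eq_zero_of_Lpow_eq_zero L hLd hHL hz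
  simp only [Submodule.mem_comap, LinearMap.mem_ker, LinearMap.comp_apply]
  rw [S.d_castQ, S.d_Lpow L hLd, hdz, map_zero, map_zero, map_zero]
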